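/- arXiv:2402.04155 — 2 statements merged into one kernel-verified Lean document; each statement's English description precedes it below -/
import Mathlib

section
/- Let E be a directed graph and R a unital commutative ring. For any saturated function f : T_E* → L(R), one has f_{φ_f} = f; that is, for every admissible pair (H,S) ∈ T_E*, ⋂_{u∈H} φ_f(u) ∩ ⋂_{v∈S} φ_f(v^H) = f((H,S)). -/
namespace LPAQuot

/-- A directed graph `E = (E⁰, E¹, s, r)` with vertex type `V` and edge type `E`. -/
structure Graph (V E : Type) where
  s : E → V
  r : E → V

namespace Graph

variable {V E R : Type} [CommRing R] (G : Graph V E)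

/-- `u` reaches `w` through a (possibly trivial) path. -/
def Reaches (u w : V) : Prop :=
  Relation.ReflTransGen (fun a b => ∃ e, G.s e = a ∧ G.r e = b) u w

/-- A set of vertices is hereditary if it is closed under ranges of paths. -/
def IsHereditary (H : Set V) : Prop :=
  ∀ ⦃u w : V⦄, u ∈ H → G.Reaches u w → w ∈ H

/-- A vertex is regular if `0 < |s⁻¹(v)| < ∞`. -/
def IsRegular (v : V) : Prop :=
  {e | G.s e = v}.Finite ∧ {e | G.s e = v}.Nonempty

/-- A vertex is an infinite emitter if `|s⁻¹(v)| = ∞`. -/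
def IsInfiniteEmitter (v : V) : Prop := {e | G.s e = v}.Infinite

/-- A hereditary set is saturated if every regular vertex all of whose emitted
edges have range in `H` lies in `H`. -/
def IsSaturated (H : Set V) : Prop :=
  ∀ ⦃v : V⦄, G.IsRegular v → (∀ e, G.s e = v → G.r e ∈ H) → v ∈ H

/-- Hereditary and saturated. -/
def IsHS (H : Set V) : Prop := G.IsHereditary H ∧ G.IsSaturated H

/-- `v` is a breaking vertex of `H`: an infinite emitter `v ∉ H` with
`0 < |s⁻¹(v) ∩ r⁻¹(E⁰∖H)| < ∞`. -/
def IsBreaking (H : Set V) (v : V) : Prop :=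
  G.IsInfiniteEmitter v ∧ v ∉ H ∧
    {e | G.s e = v ∧ G.r e ∉ H}.Finite ∧ {e | G.s e = v ∧ G.r e ∉ H}.Nonempty

/-- `H'` is `S`-closed: if `v ∈ S` and `r(s⁻¹(v)) ⊆ H'` then `v ∈ H'`. -/
def SClosed (S H' : Set V) : Prop :=
  ∀ v ∈ S, (∀ e, G.s e = v → G.r e ∈ H') → v ∈ H'

/-- The `S`-saturation of `H`: the smallest hereditary saturated `S`-closed set
containing `H`. -/
def SSat (H S : Set V) : Set V :=
  ⋂₀ {H' | H ⊆ H' ∧ G.IsHS H' ∧ G.SClosed S H'}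

/-- `H_v`, the intersection of all hereditary saturated sets containing `v`. -/
def Hv (v : V) : Set V := ⋂₀ {H | G.IsHS H ∧ v ∈ H}

lemma mem_Hv (v : V) : v ∈ G.Hv v := by
  simp only [Hv, Set.mem_sInter, Set.mem_setOf_eq]
  exact fun H hH => hH.2

lemma Hv_hereditary (v : V) : G.IsHereditary (G.Hv v) := by
  intro u w hu hw
  simp only [Hv, Set.mem_sInter, Set.mem_setOf_eq] at hu ⊢
  exact fun H hH => hH.1.1 (hu H hH) hw

lemma Hv_saturated (v : V) : G.IsSaturated (G.Hv v) := by
  intro w hw hr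
  simp only [Hv, Set.mem_sInter, Set.mem_setOf_eq]
  intro H hH
  refine hH.1.2 hw fun e he => ?_
  have h := hr e he
  simp only [Hv, Set.mem_sInter, Set.mem_setOf_eq] at h
  exact h H hH

/-- An admissible pair `(H, S)` other than `(∅, ∅)`; i.e. an element of `T_E^*`. -/
structure APair (Γ : Graph V E) where
  H : Set V
  S : Set V
  hered : Γ.IsHereditary H
  sat : Γ.IsSaturated H
  breaking : ∀ v ∈ S, Γ.IsBreaking H v
  nontrivial : H.Nonempty ∨ S.Nonempty

/-- The first component `𝔥` of the join of a family of admissible pairs: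
the `(⋃ᵢ Sᵢ)`-saturation of `⋃ᵢ Hᵢ`. -/
def joinH {ι : Type} (P : ι → G.APair) : Set V :=
  G.SSat (⋃ i, (P i).H) (⋃ i, (P i).S)

/-- The second component `𝔰 = (⋃ᵢ Sᵢ) ∖ 𝔥` of the join of a family of admissible pairs. -/
def joinS {ι : Type} (P : ι → G.APair) : Set V :=
  (⋃ i, (P i).S) \ G.joinH P

/-- First component of the binary join `(H₁,S₁) ∨ (H₂,S₂)`. -/
def join2H (p₁ p₂ : G.APair) : Set V := G.SSat (p₁.H ∪ p₂.H) (p₁.S ∪ p₂.S)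

/-- Second component of the binary join `(H₁,S₁) ∨ (H₂,S₂)`. -/
def join2S (p₁ p₂ : G.APair) : Set V := (p₁.S ∪ p₂.S) \ G.join2H p₁ p₂

/-- A saturated function `f : T_E^* → L(R)`:
`f(⋁ᵢ (Hᵢ,Sᵢ)) = ⋂ᵢ f((Hᵢ,Sᵢ))` for every family of admissible pairs. -/
def IsSaturatedFun (f : G.APair → Ideal R) : Prop :=
  ∀ (ι : Type) (P : ι → G.APair) (q : G.APair),
    q.H = G.joinH P → q.S = G.joinS P → f q = ⨅ i, f (P i)

/-- The set `Ê⁰` of extended vertices: vertices together with symbols `v^H`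
for `H` hereditary saturated and `v ∈ B_H`. -/
abbrev ExtVertex (Γ : Graph V E) : Type :=
  V ⊕ {p : Set V × V // Γ.IsHS p.1 ∧ Γ.IsBreaking p.1 p.2}

/-- The admissible pair `(H_u, ∅)`. -/
def pairOfVertex (u : V) : G.APair where
  H := G.Hv u
  S := ∅
  hered := G.Hv_hereditary u
  sat := G.Hv_saturated u
  breaking := fun v hv => absurd hv (Set.notMem_empty v)
  nontrivial := Or.inl ⟨u, G.mem_Hv u⟩

/-- The admissible pair `(H, {v})` for `v ∈ B_H`. -/
def pairOfBreaking (H : Set V) (v : V) (hH : G.IsHS H) (hv : G.IsBreaking H v) :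
    G.APair where
  H := H
  S := {v}
  hered := hH.1
  sat := hH.2
  breaking := fun w hw => by
    rw [Set.mem_singleton_iff] at hw
    subst hw
    exact hv
  nontrivial := Or.inr ⟨v, rfl⟩

/-- The function `φ_f : Ê⁰ → L(R)` associated to a saturated function `f`:
`φ_f(u) = f((H_u, ∅))` and `φ_f(v^H) = f((H, {v}))`. -/
def phiOf (f : G.APair → Ideal R) : G.ExtVertex → Ideal R :=
  Sum.elim (fun u => f (G.pairOfVertex u))
    (fun p => f (G.pairOfBreaking p.1.1 p.1.2 p.2.1 p.2.2))

/-- `⋂_{u∈H} φ(u) ∩ ⋂_{v∈S} φ(v^H)`, that is, `f_φ((H,S))`. -/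
def phiPair (φ : G.ExtVertex → Ideal R) (p : G.APair) : Ideal R :=
  (⨅ u : p.H, φ (Sum.inl u.1)) ⊓
    ⨅ v : p.S, φ (Sum.inr ⟨(p.H, v.1), ⟨p.hered, p.sat⟩, p.breaking v.1 v.2⟩)

/-- The function `f_φ : T_E^* → L(R)` associated to `φ : Ê⁰ → L(R)`. -/
def satFunOf (φ : G.ExtVertex → Ideal R) : G.APair → Ideal R :=
  fun p => G.phiPair φ p

/-- A graded ideal function `φ : Ê⁰ → L(R)`: it satisfies
(i) `⋂_{u∈𝔥} φ(u) ∩ ⋂_{v∈𝔰} φ(v^𝔥)` splits over binary joins,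
(ii) `H_v ⊆ H_u` implies `φ(u) ⊆ φ(v)`,
(iii) `φ(v^H) ⊆ ⋂_{w∈H} φ(w)`. -/
def IsGradedIdealFun (φ : G.ExtVertex → Ideal R) : Prop :=
  (∀ p₁ p₂ q : G.APair, q.H = G.join2H p₁ p₂ → q.S = G.join2S p₁ p₂ →
      G.phiPair φ q = G.phiPair φ p₁ ⊓ G.phiPair φ p₂) ∧
  (∀ u v : V, G.Hv v ⊆ G.Hv u → φ (Sum.inl u) ≤ φ (Sum.inl v)) ∧
  (∀ (H : Set V) (hH : G.IsHS H) (v : V) (hv : G.IsBreaking H v),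
      φ (Sum.inr ⟨(H, v), hH, hv⟩) ≤ ⨅ w : H, φ (Sum.inl w.1))

/-- The extended order `x ≥ y` on `Ê⁰`: on vertices it is the path order, each
breaking vertex `v` lies above the symbol `v^H`, and the symbols `v^H` are sinks. -/
def extGE (Γ : Graph V E) : Γ.ExtVertex → Γ.ExtVertex → Prop
  | Sum.inl u, Sum.inl w => Γ.Reaches u w
  | Sum.inl u, Sum.inr p => Γ.Reaches u p.1.2
  | Sum.inr _, Sum.inl _ => False
  | Sum.inr p, Sum.inr q => p = q

/-!
Every admissible pair `(H, S)` is the join of the pairs `(H_u, ∅)` for `u ∈ H` and `(H, {v})`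
for `v ∈ S`: their components already reunite to `H` and `S`, and `(H, S)` itself is
`S`-saturated because each `v ∈ S` emits an edge leaving `H`. Saturatedness of `f` turns this
join into the intersection `⋂_{u∈H} f(H_u, ∅) ∩ ⋂_{v∈S} f(H, {v})`, which is `f_{φ_f}(H, S)`.
-/

lemma Hv_subset_of_mem {H : Set V} (hH : G.IsHS H) {u : V} (hu : u ∈ H) : G.Hv u ⊆ H :=
  Set.sInter_subset_of_mem ⟨hH, hu⟩

lemma SSat_eq_self {H S : Set V} (hH : G.IsHS H) (hS : ∀ v ∈ S, G.IsBreaking H v) :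
    G.SSat H S = H := by
  refine subset_antisymm (Set.sInter_subset_of_mem ⟨subset_rfl, hH, fun v hv hall => ?_⟩)
    (Set.subset_sInter fun H' hH' => hH'.1)
  obtain ⟨e, he, hexit⟩ := (hS v hv).2.2.2
  exact absurd (hall e he) hexit

namespace APair

variable {G}

lemma isHS (p : G.APair) : G.IsHS p.H := ⟨p.hered, p.sat⟩

def basicPairs (p : G.APair) : p.H ⊕ p.S → G.APair :=
  Sum.elim (fun u => G.pairOfVertex u.1)
    (fun v => G.pairOfBreaking p.H v.1 p.isHS (p.breaking v.1 v.2))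

lemma iUnion_basicPairs_H (p : G.APair) : ⋃ i, (p.basicPairs i).H = p.H := by
  refine subset_antisymm (Set.iUnion_subset ?_) fun u hu =>
    Set.mem_iUnion.2 ⟨Sum.inl ⟨u, hu⟩, G.mem_Hv u⟩
  rintro (u | v)
  · exact G.Hv_subset_of_mem p.isHS u.2
  · exact subset_rfl

lemma iUnion_basicPairs_S (p : G.APair) : ⋃ i, (p.basicPairs i).S = p.S := by
  refine subset_antisymm (Set.iUnion_subset ?_) fun v hv =>
    Set.mem_iUnion.2 ⟨Sum.inr ⟨v, hv⟩, rfl⟩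
  rintro (u | v)
  · exact Set.empty_subset _
  · exact Set.singleton_subset_iff.2 v.2

lemma joinH_basicPairs (p : G.APair) : G.joinH p.basicPairs = p.H := by
  rw [joinH, iUnion_basicPairs_H, iUnion_basicPairs_S, G.SSat_eq_self p.isHS p.breaking]

lemma joinS_basicPairs (p : G.APair) : G.joinS p.basicPairs = p.S := by
  rw [joinS, joinH_basicPairs, iUnion_basicPairs_S, sdiff_eq_left]
  exact Set.disjoint_left.2 fun v hvS => (p.breaking v hvS).2.1

lemma satFunOf_phiOf_eq_iInf (f : G.APair → Ideal R) (p : G.APair) :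
    G.satFunOf (G.phiOf f) p = ⨅ i, f (p.basicPairs i) := by
  rw [iInf_sum]
  rfl

end APair

/-- For a saturated function `f`, one has `f_{φ_f} = f`: for every
admissible pair `(H,S) ∈ T_E^*`, `⋂_{u∈H} φ_f(u) ∩ ⋂_{v∈S} φ_f(v^H) = f((H,S))`. -/
theorem statement_5 (f : G.APair → Ideal R) (hf : G.IsSaturatedFun f) (p : G.APair) :
    G.satFunOf (G.phiOf f) p = f p := by
  rw [p.satFunOf_phiOf_eq_iInf f,
    hf _ p.basicPairs p p.joinH_basicPairs.symm p.joinS_basicPairs.symm]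

end Graph

end LPAQuot
end

section
/- Let E be a directed graph and R a unital commutative ring. The assignments f ↦ φ_f and φ ↦ f_φ are mutually inverse bijections between the set of saturated functions T_E* → L(R) and the set of graded ideal functions Ê⁰ → L(R). -/
/-!
Every admissible pair `(H, S)` is the join of the pairs `(H_u, ∅)`, `u ∈ H`, and `(H, {v})`,
`v ∈ S`; hence a saturated function is recovered from `φ_f`, and it is antitone for the order
of `T_E^*`, which gives conditions (ii) and (iii) for `φ_f`.

Conversely, for a graded ideal function `φ` and a family `(Hᵢ, Sᵢ)`, put
`I = ⋂ᵢ f_φ(Hᵢ, Sᵢ)`. The set `{u | I ≤ φ(u)}` is hereditary by (ii); it is saturated and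
`(⋃ Sᵢ)`-closed because a regular vertex, or a breaking vertex of some `Hᵢ`, has only finitely
many relevant ranges, which lie in a single finite binary join to which (i) applies. So it
contains `𝔥`, and `φ(v^𝔥)` is reached by one more binary join with `(𝔥, ∅)`.
-/

namespace LPAQuot

namespace Graph

variable {V E R : Type} [CommRing R] (G : Graph V E)

lemma subset_sSat (H S : Set V) : H ⊆ G.SSat H S := fun _ hx =>
  Set.mem_sInter.2 fun _ hH' => hH'.1 hx

lemma sSat_subset {H S H' : Set V} (h1 : H ⊆ H') (h2 : G.IsHS H') (h3 : G.SClosed S H') :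
    G.SSat H S ⊆ H' := fun _ hx => Set.mem_sInter.1 hx H' ⟨h1, h2, h3⟩

lemma isHS_sSat (H S : Set V) : G.IsHS (G.SSat H S) :=
  ⟨fun _ _ hu hr => Set.mem_sInter.2 fun H' hH' => hH'.2.1.1 (Set.mem_sInter.1 hu H' hH') hr,
    fun _ hv hr => Set.mem_sInter.2 fun H' hH' =>
      hH'.2.1.2 hv fun e he => Set.mem_sInter.1 (hr e he) H' hH'⟩

lemma sClosed_sSat (H S : Set V) : G.SClosed S (G.SSat H S) := fun v hv hr =>
  Set.mem_sInter.2 fun H' hH' => hH'.2.2 v hv fun e he => Set.mem_sInter.1 (hr e he) H' hH'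

lemma isHS_Hv (v : V) : G.IsHS (G.Hv v) := ⟨G.Hv_hereditary v, G.Hv_saturated v⟩

lemma Hv_subset {H : Set V} {u : V} (h : G.IsHS H) (hu : u ∈ H) : G.Hv u ⊆ H :=
  Set.sInter_subset_of_mem ⟨h, hu⟩

lemma Hv_subset_Hv {u w : V} (h : w ∈ G.Hv u) : G.Hv w ⊆ G.Hv u :=
  G.Hv_subset (G.isHS_Hv u) h

section

variable {G}

lemma SClosed.mono {S S' H : Set V} (hc : G.SClosed S H) (h : S' ⊆ S) : G.SClosed S' H :=
  fun v hv => hc v (h hv)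

/-- Breaking vertices always emit an edge leaving `H`, so they never force closure. -/
lemma sClosed_of_isBreaking {H S : Set V} (h : ∀ v ∈ S, G.IsBreaking H v) : G.SClosed S H :=
  fun v hv hr => absurd (hr _ (h v hv).2.2.2.some_mem.1) (h v hv).2.2.2.some_mem.2

lemma IsBreaking.of_subset {H H' : Set V} {v : V} (hv : G.IsBreaking H v) (hHH' : H ⊆ H')
    (hvH' : v ∉ H') (he : ∃ e, G.s e = v ∧ G.r e ∉ H') : G.IsBreaking H' v :=
  ⟨hv.1, hvH', hv.2.2.1.subset fun _ he' => ⟨he'.1, fun h => he'.2 (hHH' h)⟩, he⟩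

lemma SClosed.exists_edge_not_mem {S H : Set V} {v : V} (hc : G.SClosed S H) (hvS : v ∈ S)
    (hv : v ∉ H) : ∃ e, G.s e = v ∧ G.r e ∉ H := by
  by_contra! h
  exact hv (hc v hvS h)

lemma join2H_eq_left {p q : G.APair} (hH : p.H ⊆ q.H) (hS : p.S ⊆ q.H ∪ q.S) :
    G.join2H q p = q.H := by
  have hq : G.SClosed q.S q.H := G.sClosed_of_isBreaking q.breaking
  refine (G.sSat_subset (Set.union_subset subset_rfl hH) ⟨q.hered, q.sat⟩ ?_).antisymm
    (Set.subset_union_left.trans (G.subset_sSat _ _))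
  rintro v (hv | hv) hr
  · exact hq v hv hr
  · exact (hS hv).elim id fun hv' => hq v hv' hr

lemma join2S_eq_left {p q : G.APair} (hH : p.H ⊆ q.H) (hS : p.S ⊆ q.H ∪ q.S) :
    G.join2S q p = q.S := by
  ext v
  rw [join2S, join2H_eq_left hH hS]
  exact ⟨fun ⟨hv, hvH⟩ => hv.elim id fun hv' => (hS hv').resolve_left hvH,
    fun hv => ⟨Or.inl hv, (q.breaking v hv).2.1⟩⟩

end

def join2 (p₁ p₂ : G.APair) : G.APair where
  H := G.join2H p₁ p₂
  S := G.join2S p₁ p₂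
  hered := (G.isHS_sSat _ _).1
  sat := (G.isHS_sSat _ _).2
  breaking := fun v ⟨hvS, hvH⟩ => by
    have hedge := (G.sClosed_sSat _ _).exists_edge_not_mem hvS hvH
    rcases hvS with hv | hv
    · exact (p₁.breaking v hv).of_subset (fun x hx => G.subset_sSat _ _ (Or.inl hx)) hvH hedge
    · exact (p₂.breaking v hv).of_subset (fun x hx => G.subset_sSat _ _ (Or.inr hx)) hvH hedge
  nontrivial := by
    rcases p₁.nontrivial with ⟨u, hu⟩ | ⟨v, hv⟩
    · exact Or.inl ⟨u, G.subset_sSat _ _ (Or.inl hu)⟩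
    · by_cases hvH : v ∈ G.join2H p₁ p₂
      · exact Or.inl ⟨v, hvH⟩
      · exact Or.inr ⟨v, Or.inl hv, hvH⟩

def canonFam (p : G.APair) : p.H ⊕ p.S → G.APair :=
  Sum.elim (fun u => G.pairOfVertex u.1)
    (fun v => G.pairOfBreaking p.H v.1 ⟨p.hered, p.sat⟩ (p.breaking v.1 v.2))

lemma iUnion_canonFam_S (p : G.APair) : ⋃ i, (G.canonFam p i).S = p.S :=
  Set.iUnion_subset (fun
      | .inl _ => Set.empty_subset _
      | .inr v => Set.singleton_subset_iff.2 v.2) |>.antisymm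
    fun v hv => Set.mem_iUnion_of_mem (Sum.inr ⟨v, hv⟩) rfl

lemma joinH_canonFam (p : G.APair) : G.joinH (G.canonFam p) = p.H := by
  refine (G.sSat_subset ?_ ⟨p.hered, p.sat⟩ ?_).antisymm
    fun u hu => G.subset_sSat _ _ (Set.mem_iUnion_of_mem (Sum.inl ⟨u, hu⟩) (G.mem_Hv u))
  · exact Set.iUnion_subset fun
      | .inl u => G.Hv_subset ⟨p.hered, p.sat⟩ u.2
      | .inr _ => subset_rfl
  · rw [iUnion_canonFam_S]
    exact G.sClosed_of_isBreaking p.breaking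

lemma joinS_canonFam (p : G.APair) : G.joinS (G.canonFam p) = p.S := by
  rw [joinS, joinH_canonFam, iUnion_canonFam_S]
  exact sdiff_eq_left.2 (Set.disjoint_left.2 fun v hvS => (p.breaking v hvS).2.1)

section SaturatedFun

variable {G} {f : G.APair → Ideal R}

lemma IsSaturatedFun.eq_inf (hf : G.IsSaturatedFun f) {p₁ p₂ q : G.APair}
    (hH : q.H = G.join2H p₁ p₂) (hS : q.S = G.join2S p₁ p₂) : f q = f p₁ ⊓ f p₂ := by
  have hU : ∀ g : G.APair → Set V, (⋃ b, g (cond b p₁ p₂)) = g p₁ ∪ g p₂ :=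
    fun _ => iSup_bool_eq
  rw [hf Bool (fun b => cond b p₁ p₂) q (by rw [hH, joinH, hU, hU]; rfl)
    (by rw [hS, joinS, joinH, hU, hU]; rfl), iInf_bool_eq]
  rfl

lemma IsSaturatedFun.antitone (hf : G.IsSaturatedFun f) {p q : G.APair} (hH : p.H ⊆ q.H)
    (hS : p.S ⊆ q.H ∪ q.S) : f q ≤ f p :=
  (hf.eq_inf (join2H_eq_left hH hS).symm (join2S_eq_left hH hS).symm).trans_le inf_le_right

lemma IsSaturatedFun.satFunOf_phiOf (hf : G.IsSaturatedFun f) : G.satFunOf (G.phiOf f) = f := by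
  funext p
  rw [hf _ (G.canonFam p) p (G.joinH_canonFam p).symm (G.joinS_canonFam p).symm, iInf_sum]
  rfl

lemma IsSaturatedFun.isGradedIdealFun_phiOf (hf : G.IsSaturatedFun f) :
    G.IsGradedIdealFun (G.phiOf f) := by
  have hpair : G.phiPair (G.phiOf f) = f := hf.satFunOf_phiOf
  refine ⟨fun p₁ p₂ q hH hS => ?_, fun u v huv => ?_, fun H hH v hv => le_iInf fun w => ?_⟩
  · rw [hpair]
    exact hf.eq_inf hH hS
  · exact hf.antitone (p := G.pairOfVertex v) (q := G.pairOfVertex u) huv (Set.empty_subset _)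
  · exact hf.antitone (p := G.pairOfVertex w) (q := G.pairOfBreaking H v hH hv)
      (G.Hv_subset hH w.2) (Set.empty_subset _)

end SaturatedFun

section GradedIdealFun

variable {G} {φ : G.ExtVertex → Ideal R}

variable (φ) in
lemma phiPair_le_inl (p : G.APair) {u : V} (hu : u ∈ p.H) : G.phiPair φ p ≤ φ (Sum.inl u) :=
  inf_le_left.trans (iInf_le _ (⟨u, hu⟩ : p.H))

variable (φ) in
lemma phiPair_le_inr (p : G.APair) {H : Set V} {v : V} (hpH : p.H = H) (hv : v ∈ p.S)
    (hH : G.IsHS H) (hB : G.IsBreaking H v) :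
    G.phiPair φ p ≤ φ (Sum.inr ⟨(H, v), hH, hB⟩) := by
  subst hpH
  exact inf_le_right.trans (iInf_le _ (⟨v, hv⟩ : p.S))

lemma IsGradedIdealFun.phiPair_join2 (hφ : G.IsGradedIdealFun φ) (p₁ p₂ : G.APair) :
    G.phiPair φ (G.join2 p₁ p₂) = G.phiPair φ p₁ ⊓ G.phiPair φ p₂ :=
  hφ.1 _ _ _ rfl rfl

lemma IsGradedIdealFun.phiPair_antitone (hφ : G.IsGradedIdealFun φ) {p q : G.APair}
    (hH : p.H ⊆ q.H) (hS : p.S ⊆ q.H ∪ q.S) : G.phiPair φ q ≤ G.phiPair φ p :=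
  (hφ.1 q p q (join2H_eq_left hH hS).symm (join2S_eq_left hH hS).symm).trans_le inf_le_right

lemma IsGradedIdealFun.phiPair_pairOfVertex (hφ : G.IsGradedIdealFun φ) (u : V) :
    G.phiPair φ (G.pairOfVertex u) = φ (Sum.inl u) :=
  (phiPair_le_inl φ _ (G.mem_Hv u)).antisymm <|
    le_inf (le_iInf fun w => hφ.2.1 u w (G.Hv_subset_Hv w.2)) (le_iInf fun v => v.2.elim)

lemma IsGradedIdealFun.phiPair_pairOfBreaking (hφ : G.IsGradedIdealFun φ) (H : Set V) (v : V)
    (hH : G.IsHS H) (hv : G.IsBreaking H v) :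
    G.phiPair φ (G.pairOfBreaking H v hH hv) = φ (Sum.inr ⟨(H, v), hH, hv⟩) :=
  (phiPair_le_inr φ _ rfl rfl hH hv).antisymm <|
    le_inf (hφ.2.2 H hH v hv) (le_iInf fun ⟨w, hw⟩ => by
      obtain rfl : w = v := hw
      exact le_rfl)

lemma IsGradedIdealFun.exists_pair_of_finite (hφ : G.IsGradedIdealFun φ) {I : Ideal R}
    (p₀ : G.APair) (h₀ : I ≤ G.phiPair φ p₀) {X : Set V} (hX : X.Finite)
    (hI : ∀ x ∈ X, I ≤ φ (Sum.inl x)) :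
    ∃ p : G.APair, X ⊆ p.H ∧ I ≤ G.phiPair φ p := by
  induction X, hX using Set.Finite.induction_on with
  | empty => exact ⟨p₀, Set.empty_subset _, h₀⟩
  | @insert x T _ _ ih =>
    obtain ⟨p, hTp, hIp⟩ := ih fun y hy => hI y (Set.mem_insert_of_mem x hy)
    refine ⟨G.join2 p (G.pairOfVertex x), Set.insert_subset ?_ ?_, ?_⟩
    · exact G.subset_sSat _ _ (Or.inr (G.mem_Hv x))
    · exact hTp.trans fun y hy => G.subset_sSat _ _ (Or.inl hy)
    · rw [hφ.phiPair_join2, hφ.phiPair_pairOfVertex]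
      exact le_inf hIp (hI x (Set.mem_insert x T))

lemma IsGradedIdealFun.isHereditary_setOf_le (hφ : G.IsGradedIdealFun φ) (I : Ideal R) :
    G.IsHereditary {u | I ≤ φ (Sum.inl u)} := fun u w hu huw =>
  hu.trans (hφ.2.1 u w (G.Hv_subset_Hv (G.Hv_hereditary u (G.mem_Hv u) huw)))

/-- The finitely many ranges of a regular vertex lie in one admissible pair bounded below by
`I`, whose saturated vertex set then contains the vertex itself. -/
lemma IsGradedIdealFun.isSaturated_setOf_le (hφ : G.IsGradedIdealFun φ) (I : Ideal R) :
    G.IsSaturated {u | I ≤ φ (Sum.inl u)} := by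
  intro v hreg hr
  obtain ⟨e₀, he₀⟩ := hreg.2
  obtain ⟨p, hXp, hIp⟩ := hφ.exists_pair_of_finite (G.pairOfVertex (G.r e₀))
    ((hr e₀ he₀).trans_eq (hφ.phiPair_pairOfVertex _).symm) (hreg.1.image G.r)
    (by rintro _ ⟨e, he, rfl⟩; exact hr e he)
  exact hIp.trans (phiPair_le_inl φ p (p.sat hreg fun e he => hXp ⟨e, he, rfl⟩))

/-- Joining `p` with a pair containing the finitely many ranges of `v` outside `p.H` puts `v`
into the vertex set of the join. -/
lemma IsGradedIdealFun.le_of_mem_S (hφ : G.IsGradedIdealFun φ) {I : Ideal R} {p : G.APair}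
    (hp : I ≤ G.phiPair φ p) {v : V} (hv : v ∈ p.S)
    (hr : ∀ e, G.s e = v → I ≤ φ (Sum.inl (G.r e))) :
    I ≤ φ (Sum.inl v) := by
  obtain ⟨p', hXp', hIp'⟩ := hφ.exists_pair_of_finite p hp
    ((p.breaking v hv).2.2.1.image G.r) (by rintro _ ⟨e, ⟨he, -⟩, rfl⟩; exact hr e he)
  have hvq : v ∈ G.join2H p p' := G.sClosed_sSat _ _ v (Or.inl hv) fun e he => by
    by_cases h : G.r e ∈ p.H
    · exact G.subset_sSat _ _ (Or.inl h)
    · exact G.subset_sSat _ _ (Or.inr (hXp' ⟨e, ⟨he, h⟩, rfl⟩))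
  have hIq : I ≤ G.phiPair φ (G.join2 p p') := by
    rw [hφ.phiPair_join2]
    exact le_inf hp hIp'
  exact hIq.trans (phiPair_le_inl φ (G.join2 p p') hvq)

lemma IsGradedIdealFun.le_of_mem_joinH (hφ : G.IsGradedIdealFun φ) {ι : Type}
    (P : ι → G.APair) {u : V} (hu : u ∈ G.joinH P) :
    ⨅ i, G.phiPair φ (P i) ≤ φ (Sum.inl u) := by
  refine G.sSat_subset ?_ ⟨hφ.isHereditary_setOf_le _, hφ.isSaturated_setOf_le _⟩ ?_ hu
  · exact Set.iUnion_subset fun i u hu =>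
      (iInf_le (fun i => G.phiPair φ (P i)) i).trans (phiPair_le_inl φ (P i) hu)
  · intro v hv hr
    obtain ⟨i, hi⟩ := Set.mem_iUnion.1 hv
    exact hφ.le_of_mem_S (iInf_le _ i) hi hr

lemma IsGradedIdealFun.le_of_mem_joinS (hφ : G.IsGradedIdealFun φ) {ι : Type}
    (P : ι → G.APair) {H : Set V} (hHP : H = G.joinH P) {v : V} (hv : v ∈ G.joinS P)
    (hH : G.IsHS H) (hB : G.IsBreaking H v) :
    ⨅ i, G.phiPair φ (P i) ≤ φ (Sum.inr ⟨(H, v), hH, hB⟩) := by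
  subst hHP
  obtain ⟨j, hj⟩ := Set.mem_iUnion.1 hv.1
  have hPj : (P j).H ⊆ G.joinH P :=
    (Set.subset_iUnion (fun i => (P i).H) j).trans (G.subset_sSat _ _)
  -- `(𝔥, ∅)` is an admissible pair only when `𝔥 ≠ ∅`
  rcases (G.joinH P).eq_empty_or_nonempty with hJ | hJ
  · exact (iInf_le _ j).trans <| phiPair_le_inr φ (P j)
      (Set.subset_eq_empty hPj hJ |>.trans hJ.symm) hj hH hB
  · let p : G.APair := ⟨G.joinH P, ∅, hH.1, hH.2, fun _ h => h.elim, Or.inl hJ⟩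
    have hqH : G.join2H (P j) p = G.joinH P :=
      (G.sSat_subset (Set.union_subset hPj subset_rfl) hH
        ((G.sClosed_sSat _ _).mono (Set.union_subset (Set.subset_iUnion (fun i => (P i).S) j)
          (Set.empty_subset _)))).antisymm
        (Set.subset_union_right.trans (G.subset_sSat _ _))
    have hIp : ⨅ i, G.phiPair φ (P i) ≤ G.phiPair φ p :=
      le_inf (le_iInf fun u => hφ.le_of_mem_joinH P u.2) (le_iInf fun w => w.2.elim)
    have hIq : ⨅ i, G.phiPair φ (P i) ≤ G.phiPair φ (G.join2 (P j) p) := by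
      rw [hφ.phiPair_join2]
      exact le_inf (iInf_le _ j) hIp
    have hvS : v ∈ G.join2S (P j) p := ⟨Or.inl hj, hqH ▸ hv.2⟩
    exact hIq.trans (phiPair_le_inr φ _ hqH hvS hH hB)

lemma IsGradedIdealFun.isSaturatedFun_satFunOf (hφ : G.IsGradedIdealFun φ) :
    G.IsSaturatedFun (G.satFunOf φ) := by
  intro ι P q hH hS
  show G.phiPair φ q = ⨅ i, G.phiPair φ (P i)
  refine le_antisymm (le_iInf fun i => hφ.phiPair_antitone ?_ ?_)
    (le_inf (le_iInf fun u => hφ.le_of_mem_joinH P (hH ▸ u.2))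
      (le_iInf fun v =>
        hφ.le_of_mem_joinS P hH (hS ▸ v.2) ⟨q.hered, q.sat⟩ (q.breaking v v.2)))
  · exact hH ▸ (Set.subset_iUnion (fun i => (P i).H) i).trans (G.subset_sSat _ _)
  · intro v hv
    by_cases hvq : v ∈ q.H
    · exact Or.inl hvq
    · exact Or.inr (hS ▸ ⟨Set.mem_iUnion_of_mem i hv, hH ▸ hvq⟩)

lemma IsGradedIdealFun.phiOf_satFunOf (hφ : G.IsGradedIdealFun φ) :
    G.phiOf (G.satFunOf φ) = φ := by
  funext x
  rcases x with u | ⟨⟨H, v⟩, hH, hv⟩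
  · exact hφ.phiPair_pairOfVertex u
  · exact hφ.phiPair_pairOfBreaking H v hH hv

end GradedIdealFun

/-- The assignments `f ↦ φ_f` and `φ ↦ f_φ` are mutually inverse
bijections between saturated functions `T_E^* → L(R)` and graded ideal functions
`Ê⁰ → L(R)`. -/
theorem statement_6 :
    (∀ f : G.APair → Ideal R, G.IsSaturatedFun f → G.IsGradedIdealFun (G.phiOf f)) ∧
    (∀ φ : G.ExtVertex → Ideal R, G.IsGradedIdealFun φ → G.IsSaturatedFun (G.satFunOf φ)) ∧
    (∀ f : G.APair → Ideal R, G.IsSaturatedFun f → G.satFunOf (G.phiOf f) = f) ∧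
    (∀ φ : G.ExtVertex → Ideal R, G.IsGradedIdealFun φ → G.phiOf (G.satFunOf φ) = φ) :=
  ⟨fun _ hf => hf.isGradedIdealFun_phiOf, fun _ hφ => hφ.isSaturatedFun_satFunOf,
    fun _ hf => hf.satFunOf_phiOf, fun _ hφ => hφ.phiOf_satFunOf⟩

end Graph

end LPAQuot
end
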